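/- Let n be a positive integer, a, b ∈ Mat_n(ℂ) with [a, b] = −2b, and let f, g : ℂ → Mat_n(ℂ) be differentiable functions satisfying f'(x) = −f² + g − (x/2)·I − b and g'(x) = 3fg − gf − 2[f, b] + a for all x ∈ ℂ. Then y = f is twice differentiable and satisfies the matrix Painlevé-2 equation P₂²: y'' = 2[y, y'] + 2y³ + x y + b y + y b + (a − (1/2)·I). -/

import Mathlib

/-!
Differentiating the first equation gives `f'' = -(f' f + f f') + g' - ½`, and the first equation
itself expresses `g = f' + f² + (x/2) + b`. Substituting this into the second equation turns `g'`
into a noncommutative polynomial in `f, f'`, and the claim becomes a polynomial identity.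
-/

section
variable {𝕜 𝔸 : Type*}

theorem painleve_two_identity [Field 𝕜] [CharZero 𝕜] [Ring 𝔸] [Algebra 𝕜 𝔸]
    {a b f f' g : 𝔸} {x : 𝕜} (hg : g = f' + f ^ 2 + (x / 2) • 1 + b) :
    -(f' * f + f * f') + (3 * (f * g) - g * f - 2 * (f * b - b * f) + a) - (1 / 2 : 𝕜) • 1 =
      (2 : 𝕜) • (f * f' - f' * f) + 2 * f ^ 3 + x • f + b * f + f * b + (a - (1 / 2 : 𝕜) • 1) := by
  have h3 : (3 : 𝔸) = (3 : 𝕜) • 1 := by rw [← Algebra.algebraMap_eq_smul_one, map_ofNat]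
  have h2 : (2 : 𝔸) = (2 : 𝕜) • 1 := by rw [← Algebra.algebraMap_eq_smul_one, map_ofNat]
  subst hg
  rw [h3, h2]
  simp only [mul_add, add_mul, mul_sub, smul_mul_assoc, mul_smul_comm, mul_assoc, pow_succ,
    pow_zero, one_mul, mul_one]
  module

variable [NontriviallyNormedField 𝕜] [NormedRing 𝔸] [NormedAlgebra 𝕜 𝔸]

theorem hasDerivAt_deriv_of_riccati {f g : 𝕜 → 𝔸} {b g' : 𝔸} {x : 𝕜}
    (hf : ∀ y, HasDerivAt f (-(f y) ^ 2 + g y - (y / 2) • 1 - b) y) (hg : HasDerivAt g g' x) :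
    HasDerivAt (deriv f) (-(deriv f x * f x + f x * deriv f x) + g' - (1 / 2 : 𝕜) • 1) x := by
  have hsq : HasDerivAt (fun y ↦ f y ^ 2) (deriv f x * f x + f x * deriv f x) x := by
    simpa only [pow_two, (hf x).deriv] using (hf x).fun_mul (hf x)
  have hhalf : HasDerivAt (fun y : 𝕜 ↦ (y / 2) • (1 : 𝔸)) ((1 / 2 : 𝕜) • 1) x :=
    ((hasDerivAt_id' x).div_const 2).smul_const 1
  exact (((hsq.neg.add hg).sub hhalf).sub_const b).congr_of_eventuallyEq
    (Filter.Eventually.of_forall fun y ↦ (hf y).deriv)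

theorem hasDerivAt_deriv_of_painleve_four_degeneration [CharZero 𝕜] {a b : 𝔸} {f g : 𝕜 → 𝔸}
    (hf : ∀ x, HasDerivAt f (-(f x) ^ 2 + g x - (x / 2) • 1 - b) x)
    (hg : ∀ x, HasDerivAt g (3 * (f x * g x) - g x * f x - 2 * (f x * b - b * f x) + a) x)
    (x : 𝕜) :
    HasDerivAt (deriv f)
      ((2 : 𝕜) • (f x * deriv f x - deriv f x * f x) + 2 * f x ^ 3 + x • f x
        + b * f x + f x * b + (a - (1 / 2 : 𝕜) • 1)) x := by
  have hgx : g x = deriv f x + f x ^ 2 + (x / 2) • 1 + b := by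
    rw [(hf x).deriv]
    abel
  rw [← painleve_two_identity hgx]
  exact hasDerivAt_deriv_of_riccati hf (hg x)

end

theorem matrix_P22_from_degeneration_general (n : ℕ)
    (a b : Matrix (Fin n) (Fin n) ℂ)
    (f g : ℂ → Matrix (Fin n) (Fin n) ℂ)
    (hf : ∀ x : ℂ, HasDerivAt f (-(f x) ^ 2 + g x - (x / 2) • 1 - b) x)
    (hg : ∀ x : ℂ, HasDerivAt g
      (3 * (f x * g x) - g x * f x - 2 * (f x * b - b * f x) + a) x) :
    ∀ x : ℂ, HasDerivAt (deriv f)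
      ((2 : ℂ) • (f x * deriv f x - deriv f x * f x) + 2 * (f x) ^ 3 + x • f x
        + b * f x + f x * b + (a - (1 / 2 : ℂ) • 1)) x := by
  let _ : NormedRing (Matrix (Fin n) (Fin n) ℂ) := Matrix.linftyOpNormedRing
  let _ : NormedAlgebra ℂ (Matrix (Fin n) (Fin n) ℂ) := Matrix.linftyOpNormedAlgebra
  exact hasDerivAt_deriv_of_painleve_four_degeneration hf hg

/-- If `[a, b] = −2b` and `f, g` solve `f' = −f² + g − (x/2)I − b`,
`g' = 3fg − gf − 2[f, b] + a`, then `y = f` satisfies the matrix Painlevé-2 equation P₂²: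
`y'' = 2[y, y'] + 2y³ + xy + by + yb + (a − (1/2)I)`. -/
theorem matrix_P22_from_degeneration (n : ℕ) (hn : 0 < n)
    (a b : Matrix (Fin n) (Fin n) ℂ) (hab : a * b - b * a = -(2 : ℂ) • b)
    (f g : ℂ → Matrix (Fin n) (Fin n) ℂ)
    (hf : ∀ x : ℂ, HasDerivAt f (-(f x) ^ 2 + g x - (x / 2) • 1 - b) x)
    (hg : ∀ x : ℂ, HasDerivAt g
      (3 * (f x * g x) - g x * f x - 2 * (f x * b - b * f x) + a) x) :
    ∀ x : ℂ, HasDerivAt (deriv f)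
      ((2 : ℂ) • (f x * deriv f x - deriv f x * f x) + 2 * (f x) ^ 3 + x • f x
        + b * f x + f x * b + (a - (1 / 2 : ℂ) • 1)) x :=
  matrix_P22_from_degeneration_general n a b f g hf hg
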